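/- Deterministic form of Theorem 2(a) (prediction error on the estimated design): let k ≥ 1, n ≥ 1, κ > 0, ε ≥ 0, C₃ ≥ 0, δ_∞ ≥ 0, λ ≥ 0, δ ≥ 0; let Z and U be n×k real matrices with |U_{ij}| ≤ δ_∞ for all entries, and let ν_max be the largest eigenvalue of D = (1/n)ZᵀZ. Let L : ℝ^k → ℝ be differentiable and L̂ : ℝ^k → ℝ arbitrary, and let β ∈ ℝ^k. Assume: for all Δ ∈ ℝ^k, (1/n)(L(β + Δ) − L(β) − ⟨∇L(β), Δ⟩) ≥ (κ/2)‖Δ‖₂²; ‖(1/n)∇L(β)‖₂ ≤ ε; |(L̂(β̂) − L(β̂)) − (L̂(β) − L(β))| ≤ C₃·n·δ_∞·‖β̂ − β‖₂; and β̂ is a global minimizer of b ↦ L̂(b) + λ√k‖b‖₂ + (δ/2)‖b‖₂². Then (1/n)‖(Z + U)(β̂ − β)‖₂² ≤ 2(ν_max + k·δ_∞²)·(4/κ²)·(ε + C₃·δ_∞ + λ√k/n + δ·‖β‖₂/n)². -/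

import Mathlib

open Matrix
open scoped RealInnerProductSpace

/-!
Write `Δ = βhat - β`. Comparing the penalized objective at `βhat` and at `β` bounds
`Lhat βhat - Lhat β` by `(λ√k + δ‖β‖)‖Δ‖`; the bias hypothesis transfers this to `L`, and restricted
strong convexity against the score gives the basic inequality
`(κ/2)‖Δ‖² ≤ (ε + C₃δ∞ + λ√k/n + δ‖β‖/n)‖Δ‖`, i.e. `‖Δ‖ ≤ (2/κ)(ε + C₃δ∞ + λ√k/n + δ‖β‖/n)`.
On the design side `(1/n)‖(Z + U)Δ‖² ≤ (2/n)‖ZΔ‖² + (2/n)‖UΔ‖²`, where the first term is at most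
`2ν_max‖Δ‖²` by definition of `ν_max` and the second at most `2kδ∞²‖Δ‖²` by Cauchy–Schwarz row by row.
-/

section EstimationError

variable {F : Type*} [NormedAddCommGroup F] [InnerProductSpace ℝ F]

lemma sq_norm_sub_sq_norm_add_le (x d : F) : ‖x‖ ^ 2 - ‖x + d‖ ^ 2 ≤ 2 * ‖x‖ * ‖d‖ := by
  rw [norm_add_sq_real]
  nlinarith [neg_le_of_abs_le (abs_real_inner_le_norm x d), sq_nonneg ‖d‖]

lemma penalty_sub_penalty_add_le {a c : ℝ} (ha : 0 ≤ a) (hc : 0 ≤ c) (x d : F) :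
    (a * ‖x‖ + c / 2 * ‖x‖ ^ 2) - (a * ‖x + d‖ + c / 2 * ‖x + d‖ ^ 2) ≤ (a + c * ‖x‖) * ‖d‖ := by
  have hlin : ‖x‖ - ‖x + d‖ ≤ ‖d‖ := by simpa using norm_sub_norm_le x (x + d)
  nlinarith [mul_le_mul_of_nonneg_left hlin ha,
    mul_le_mul_of_nonneg_left (sq_norm_sub_sq_norm_add_le x d) hc]

lemma sq_le_of_half_mul_sq_le_mul {κ d e : ℝ} (hκ : 0 < κ) (hd : 0 ≤ d)
    (h : κ / 2 * d ^ 2 ≤ e * d) : d ^ 2 ≤ 4 / κ ^ 2 * e ^ 2 := by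
  rcases hd.eq_or_lt with rfl | hd
  · rw [zero_pow two_ne_zero]
    positivity
  have hκd : κ * d ≤ 2 * e := le_of_mul_le_mul_right (by nlinarith) hd
  rw [div_mul_eq_mul_div, le_div_iff₀ (by positivity)]
  nlinarith [mul_pos hκ hd]

variable {L Lhat : F → ℝ} {g β βhat : F} {n κ ε C a c : ℝ}

lemma penalized_minimizer_basic_inequality (hn : 0 < n) (ha : 0 ≤ a) (hc : 0 ≤ c)
    (hRSC : κ / 2 * ‖βhat - β‖ ^ 2 ≤ (1 / n) * (L βhat - L β - ⟪g, βhat - β⟫))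
    (hscore : ‖(1 / n) • g‖ ≤ ε)
    (hbias : |(Lhat βhat - L βhat) - (Lhat β - L β)| ≤ C * n * ‖βhat - β‖)
    (hmin : Lhat βhat + a * ‖βhat‖ + c / 2 * ‖βhat‖ ^ 2 ≤ Lhat β + a * ‖β‖ + c / 2 * ‖β‖ ^ 2) :
    κ / 2 * ‖βhat - β‖ ^ 2 ≤ (ε + C + a / n + c * ‖β‖ / n) * ‖βhat - β‖ := by
  set Δ := βhat - β
  have hpen : Lhat βhat - Lhat β ≤ (a + c * ‖β‖) * ‖Δ‖ := by
    have := penalty_sub_penalty_add_le ha hc β Δ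
    rw [add_sub_cancel] at this
    linarith
  have hloss : L βhat - L β ≤ (a + c * ‖β‖) * ‖Δ‖ + C * n * ‖Δ‖ := by
    linarith [(abs_le.mp hbias).1]
  have hinner : -((1 / n) * ⟪g, Δ⟫) ≤ ε * ‖Δ‖ := by
    rw [← real_inner_smul_left]
    exact (neg_le_abs _).trans ((abs_real_inner_le_norm _ _).trans
      (mul_le_mul_of_nonneg_right hscore (norm_nonneg Δ)))
  calc κ / 2 * ‖Δ‖ ^ 2 ≤ (1 / n) * (L βhat - L β) - (1 / n) * ⟪g, Δ⟫ := by linarith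
    _ ≤ (1 / n) * ((a + c * ‖β‖) * ‖Δ‖ + C * n * ‖Δ‖) + ε * ‖Δ‖ := by
      linarith [mul_le_mul_of_nonneg_left hloss (one_div_nonneg.mpr hn.le)]
    _ = (ε + C + a / n + c * ‖β‖ / n) * ‖Δ‖ := by field_simp; ring

lemma norm_sub_sq_le_of_penalized_minimizer (hn : 0 < n) (hκ : 0 < κ) (ha : 0 ≤ a) (hc : 0 ≤ c)
    (hRSC : κ / 2 * ‖βhat - β‖ ^ 2 ≤ (1 / n) * (L βhat - L β - ⟪g, βhat - β⟫))
    (hscore : ‖(1 / n) • g‖ ≤ ε)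
    (hbias : |(Lhat βhat - L βhat) - (Lhat β - L β)| ≤ C * n * ‖βhat - β‖)
    (hmin : Lhat βhat + a * ‖βhat‖ + c / 2 * ‖βhat‖ ^ 2 ≤ Lhat β + a * ‖β‖ + c / 2 * ‖β‖ ^ 2) :
    ‖βhat - β‖ ^ 2 ≤ 4 / κ ^ 2 * (ε + C + a / n + c * ‖β‖ / n) ^ 2 :=
  sq_le_of_half_mul_sq_le_mul hκ (norm_nonneg _)
    (penalized_minimizer_basic_inequality hn ha hc hRSC hscore hbias hmin)

end EstimationError

section Design

variable {m l : Type*} [Fintype m] [Fintype l]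

lemma EuclideanSpace.real_norm_sq_eq_dotProduct (x : EuclideanSpace ℝ m) :
    ‖x‖ ^ 2 = x.ofLp ⬝ᵥ x.ofLp := by
  rw [EuclideanSpace.real_norm_sq_eq]
  simp only [dotProduct, sq]

lemma dotProduct_transpose_mul_self_mulVec {R : Type*} [CommSemiring R] (Z : Matrix m l R)
    (v : l → R) : v ⬝ᵥ (Zᵀ * Z) *ᵥ v = Z *ᵥ v ⬝ᵥ Z *ᵥ v := by
  rw [← mulVec_mulVec, dotProduct_mulVec, vecMul_transpose]

lemma dotProduct_self_add_le (x y : m → ℝ) :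
    (x + y) ⬝ᵥ (x + y) ≤ 2 * (x ⬝ᵥ x) + 2 * (y ⬝ᵥ y) := by
  simp only [dotProduct, Pi.add_apply, Finset.mul_sum, ← Finset.sum_add_distrib]
  gcongr with i
  nlinarith [sq_nonneg (x i - y i)]

lemma mulVec_dotProduct_self_le_of_abs_le {U : Matrix m l ℝ} {b : ℝ} (hU : ∀ i j, |U i j| ≤ b)
    (v : l → ℝ) :
    U *ᵥ v ⬝ᵥ U *ᵥ v ≤ Fintype.card m * (Fintype.card l * b ^ 2 * (v ⬝ᵥ v)) := by
  have hrow : ∀ i, ∑ j, U i j ^ 2 ≤ Fintype.card l * b ^ 2 := fun i =>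
    calc ∑ j, U i j ^ 2 ≤ ∑ _j : l, b ^ 2 :=
          Finset.sum_le_sum fun j _ => sq_le_sq' (abs_le.mp (hU i j)).1 (abs_le.mp (hU i j)).2
      _ = Fintype.card l * b ^ 2 := by simp
  calc U *ᵥ v ⬝ᵥ U *ᵥ v = ∑ i, (∑ j, U i j * v j) ^ 2 := by simp only [dotProduct, mulVec, sq]
    _ ≤ ∑ i, (∑ j, U i j ^ 2) * ∑ j, v j ^ 2 :=
      Finset.sum_le_sum fun i _ => Finset.sum_mul_sq_le_sq_mul_sq _ _ _
    _ ≤ ∑ _i : m, Fintype.card l * b ^ 2 * (v ⬝ᵥ v) := by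
      rw [show ∑ j, v j ^ 2 = v ⬝ᵥ v by simp only [dotProduct, sq]]
      gcongr with i
      · exact Finset.sum_nonneg fun j _ => mul_self_nonneg (v j)
      · exact hrow i
    _ = Fintype.card m * (Fintype.card l * b ^ 2 * (v ⬝ᵥ v)) := by simp

lemma nonneg_of_forall_dotProduct_smul_transpose_mul_self_le [Nonempty l] {Z : Matrix m l ℝ}
    {c ν : ℝ} (hc : 0 ≤ c)
    (hν : ∀ v : EuclideanSpace ℝ l, v ⬝ᵥ (c • (Zᵀ * Z)) *ᵥ v ≤ ν * ‖v‖ ^ 2) : 0 ≤ ν := by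
  classical
  obtain ⟨i⟩ := ‹Nonempty l›
  have h := hν (EuclideanSpace.single i 1)
  rw [smul_mulVec, dotProduct_smul, dotProduct_transpose_mul_self_mulVec, smul_eq_mul,
    show ‖EuclideanSpace.single i (1 : ℝ)‖ = 1 by simp, one_pow, mul_one] at h
  exact (mul_nonneg hc (Finset.sum_nonneg fun j _ => mul_self_nonneg _)).trans h

lemma prediction_error_le {Z U : Matrix m l ℝ} {b ν : ℝ} (hm : 0 < Fintype.card m)
    (hU : ∀ i j, |U i j| ≤ b)
    (hν : ∀ v : EuclideanSpace ℝ l,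
      v ⬝ᵥ ((1 / (Fintype.card m : ℝ)) • (Zᵀ * Z)) *ᵥ v ≤ ν * ‖v‖ ^ 2)
    (v : EuclideanSpace ℝ l) :
    (1 / (Fintype.card m : ℝ)) * ‖(EuclideanSpace.equiv m ℝ).symm ((Z + U) *ᵥ v)‖ ^ 2
      ≤ 2 * (ν + Fintype.card l * b ^ 2) * ‖v‖ ^ 2 := by
  have hN : (0 : ℝ) < Fintype.card m := by exact_mod_cast hm
  set N : ℝ := (Fintype.card m : ℝ)
  have hZ : Z *ᵥ v ⬝ᵥ Z *ᵥ v ≤ N * (ν * ‖v‖ ^ 2) := by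
    have h := hν v
    rw [smul_mulVec, dotProduct_smul, dotProduct_transpose_mul_self_mulVec, smul_eq_mul] at h
    rwa [one_div_mul_eq_div, div_le_iff₀' hN] at h
  have hU' := mulVec_dotProduct_self_le_of_abs_le hU v
  rw [← EuclideanSpace.real_norm_sq_eq_dotProduct v] at hU'
  calc _ = 1 / N * ((Z *ᵥ v + U *ᵥ v) ⬝ᵥ (Z *ᵥ v + U *ᵥ v)) := by
        rw [EuclideanSpace.real_norm_sq_eq_dotProduct, ← add_mulVec]
        rfl
    _ ≤ 1 / N * (2 * (N * (ν * ‖v‖ ^ 2)) + 2 * (N * (Fintype.card l * b ^ 2 * ‖v‖ ^ 2))) := by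
        gcongr
        linarith [dotProduct_self_add_le (Z *ᵥ v) (U *ᵥ v)]
    _ = 2 * (ν + Fintype.card l * b ^ 2) * ‖v‖ ^ 2 := by field_simp

end Design

theorem theorem2a_deterministic_general {k n : ℕ} (hk : 1 ≤ k) (hn : 1 ≤ n)
    (κ ε C₃ δinf lam δ : ℝ)
    (hκ : 0 < κ)
    (hlam : 0 ≤ lam) (hδ : 0 ≤ δ)
    (Z U : Matrix (Fin n) (Fin k) ℝ) (hU : ∀ i j, |U i j| ≤ δinf)
    (νmax : ℝ)
    (hν : ∀ v : EuclideanSpace ℝ (Fin k),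
      v ⬝ᵥ (((1 / (n : ℝ)) • (Zᵀ * Z)).mulVec v) ≤ νmax * ‖v‖ ^ 2)
    (L : EuclideanSpace ℝ (Fin k) → ℝ)
    (Lhat : EuclideanSpace ℝ (Fin k) → ℝ)
    (β βhat : EuclideanSpace ℝ (Fin k))
    (hRSC : ∀ Δ : EuclideanSpace ℝ (Fin k),
      κ / 2 * ‖Δ‖ ^ 2 ≤ (1 / (n : ℝ)) * (L (β + Δ) - L β - ⟪gradient L β, Δ⟫))
    (hscore : ‖(1 / (n : ℝ)) • gradient L β‖ ≤ ε)
    (hbias : |(Lhat βhat - L βhat) - (Lhat β - L β)| ≤ C₃ * n * δinf * ‖βhat - β‖)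
    (hmin : ∀ b : EuclideanSpace ℝ (Fin k),
      Lhat βhat + lam * Real.sqrt k * ‖βhat‖ + δ / 2 * ‖βhat‖ ^ 2
        ≤ Lhat b + lam * Real.sqrt k * ‖b‖ + δ / 2 * ‖b‖ ^ 2) :
    (1 / (n : ℝ)) *
        ‖(EuclideanSpace.equiv (Fin n) ℝ).symm ((Z + U).mulVec (βhat - β))‖ ^ 2
      ≤ 2 * (νmax + (k : ℝ) * δinf ^ 2) * (4 / κ ^ 2) *
          (ε + C₃ * δinf + lam * Real.sqrt k / n + δ * ‖β‖ / n) ^ 2 := by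
  have hestim : ‖βhat - β‖ ^ 2
      ≤ 4 / κ ^ 2 * (ε + C₃ * δinf + lam * Real.sqrt k / n + δ * ‖β‖ / n) ^ 2 :=
    norm_sub_sq_le_of_penalized_minimizer (by positivity) hκ (by positivity) hδ
      (by simpa using hRSC (βhat - β)) hscore (hbias.trans_eq (by ring)) (hmin β)
  have hpred := prediction_error_le (Z := Z) (by rwa [Fintype.card_fin]) hU
    (by simpa only [Fintype.card_fin] using hν) (βhat - β)
  simp only [Fintype.card_fin] at hpred
  have : Nonempty (Fin k) := ⟨⟨0, hk⟩⟩
  have hν0 : 0 ≤ νmax :=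
    nonneg_of_forall_dotProduct_smul_transpose_mul_self_le (by positivity) hν
  calc _ ≤ 2 * (νmax + k * δinf ^ 2) * ‖βhat - β‖ ^ 2 := hpred
    _ ≤ 2 * (νmax + k * δinf ^ 2) * (4 / κ ^ 2 * (ε + C₃ * δinf + lam * Real.sqrt k / n
          + δ * ‖β‖ / n) ^ 2) := by gcongr
    _ = _ := by ring

/-- Deterministic form of Theorem 2(a): prediction error on the estimated design
`Ẑ = Z + U` for the ridge-stabilized group lasso. -/
theorem theorem2a_deterministic {k n : ℕ} (hk : 1 ≤ k) (hn : 1 ≤ n)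
    (κ ε C₃ δinf lam δ : ℝ)
    (hκ : 0 < κ) (hε : 0 ≤ ε) (hC₃ : 0 ≤ C₃) (hδinf : 0 ≤ δinf)
    (hlam : 0 ≤ lam) (hδ : 0 ≤ δ)
    (Z U : Matrix (Fin n) (Fin k) ℝ) (hU : ∀ i j, |U i j| ≤ δinf)
    (νmax : ℝ)
    (hν : ∀ v : EuclideanSpace ℝ (Fin k),
      v ⬝ᵥ (((1 / (n : ℝ)) • (Zᵀ * Z)).mulVec v) ≤ νmax * ‖v‖ ^ 2)
    (L : EuclideanSpace ℝ (Fin k) → ℝ) (hL : Differentiable ℝ L)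
    (Lhat : EuclideanSpace ℝ (Fin k) → ℝ)
    (β βhat : EuclideanSpace ℝ (Fin k))
    (hRSC : ∀ Δ : EuclideanSpace ℝ (Fin k),
      κ / 2 * ‖Δ‖ ^ 2 ≤ (1 / (n : ℝ)) * (L (β + Δ) - L β - ⟪gradient L β, Δ⟫))
    (hscore : ‖(1 / (n : ℝ)) • gradient L β‖ ≤ ε)
    (hbias : |(Lhat βhat - L βhat) - (Lhat β - L β)| ≤ C₃ * n * δinf * ‖βhat - β‖)
    (hmin : ∀ b : EuclideanSpace ℝ (Fin k),
      Lhat βhat + lam * Real.sqrt k * ‖βhat‖ + δ / 2 * ‖βhat‖ ^ 2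
        ≤ Lhat b + lam * Real.sqrt k * ‖b‖ + δ / 2 * ‖b‖ ^ 2) :
    (1 / (n : ℝ)) *
        ‖(EuclideanSpace.equiv (Fin n) ℝ).symm ((Z + U).mulVec (βhat - β))‖ ^ 2
      ≤ 2 * (νmax + (k : ℝ) * δinf ^ 2) * (4 / κ ^ 2) *
          (ε + C₃ * δinf + lam * Real.sqrt k / n + δ * ‖β‖ / n) ^ 2 :=
  theorem2a_deterministic_general hk hn κ ε C₃ δinf lam δ hκ hlam hδ Z U hU νmax hν L Lhat β βhat
    hRSC hscore hbias hmin
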